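/- Let E be a finite-dimensional real normed vector space, U ⊆ E an open set, and ω : U → (E →L[ℝ] ℝ) a continuously differentiable 1-form that is closed in the sense that its derivative is symmetric: for every x ∈ U and all v, w ∈ E, (fderiv ω x v) w = (fderiv ω x w) v. Let H : ℝ × ℝ → E be a C¹ map with H(s, t) ∈ U for all (s, t) ∈ [0,1] × [0,1] and H(s, 0) = H(s, 1) for all s ∈ [0,1] (a free homotopy of loops in U). Then the loop integrals at the two ends of the homotopy agree: ∫₀¹ ω(H(0,t)) (∂H/∂t (0,t)) dt = ∫₀¹ ω(H(1,t)) (∂H/∂t (1,t)) dt. (Homotopy invariance of the integral of a closed 1-form, which makes γ ↦ ∫_γ α a well-defined homomorphism u : π₁ → ℝ.) -/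

import Mathlib

/-!
Pull `ω` back along `H` to the 1-form `η z = ω (H z) ∘ DH z` on the square. By the Poincaré
lemma on balls and a Lebesgue number for the cover of the square by preimages of those balls,
`η` is exact on every `δ`-ball centred in the square, so its boundary integral over any rectangle
of size `< δ` vanishes. Stacking such rectangles along a strip `[p, q] × [0, 1]`, the horizontal
sides at `t = 0` and `t = 1` cancel because `H` is a loop, so `s ↦ ∫₀¹ η (s, t) (0, 1) dt` is
locally, hence globally, constant on `[0, 1]`. Working with local primitives instead of
differentiating `s ↦ ∫₀¹ η (s, t) (0, 1) dt` avoids second derivatives of `H`, which is only `C¹`.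
-/

open Metric Set intervalIntegral MeasureTheory Interval

theorem IsPreconnected.apply_eq_of_forall_dist_lt {X α : Type*} [PseudoMetricSpace X]
    {s : Set X} (hs : IsPreconnected s) {g : X → α} {δ : ℝ} (hδ : 0 < δ)
    (hg : ∀ x ∈ s, ∀ y ∈ s, dist x y < δ → g x = g y) {x y : X} (hx : x ∈ s) (hy : y ∈ s) :
    g x = g y := by
  refine hs.induction₂ (fun x y => g x = g y) (fun x hx => ?_)
    (fun _ _ _ _ _ _ => Eq.trans) (fun _ _ _ _ => Eq.symm) hx hy
  filter_upwards [self_mem_nhdsWithin, mem_nhdsWithin_of_mem_nhds (ball_mem_nhds x hδ)]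
    with y hys hyx
  exact hg x hx y hys (mem_ball'.1 hyx)

section Planar

variable {F : Type*} [NormedAddCommGroup F] [NormedSpace ℝ F]

theorem ContinuousOn.intervalIntegrable_apply_comp {X : Type*} [NormedAddCommGroup X]
    [NormedSpace ℝ X] {η : X → X →L[ℝ] F} {s : Set X} (hη : ContinuousOn η s) {γ : ℝ → X}
    (hγ : Continuous γ) {a b : ℝ} (hγs : MapsTo γ [[a, b]] s) (v : X) :
    IntervalIntegrable (fun t => η (γ t) v) volume a b :=
  ((hη.comp hγ.continuousOn hγs).clm_apply continuousOn_const).intervalIntegrable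

variable [CompleteSpace F]

theorem integral_apply_eq_sub_of_hasFDerivAt {X : Type*} [NormedAddCommGroup X]
    [NormedSpace ℝ X] {η : X → X →L[ℝ] F} {g : X → F} {γ : ℝ → X} {v : X} {a b : ℝ}
    (hγ : ∀ t ∈ [[a, b]], HasDerivAt γ v t) (hg : ∀ t ∈ [[a, b]], HasFDerivAt g (η (γ t)) (γ t))
    (hint : IntervalIntegrable (fun t => η (γ t) v) volume a b) :
    ∫ t in a..b, η (γ t) v = g (γ b) - g (γ a) :=
  integral_eq_sub_of_hasDerivAt (fun t ht => (hg t ht).comp_hasDerivAt t (hγ t ht)) hint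

variable {η : ℝ × ℝ → ℝ × ℝ →L[ℝ] F}

theorem integral_vertical_sub_eq_integral_horizontal_sub {g : ℝ × ℝ → F} {p q c d : ℝ}
    (hη : ContinuousOn η ([[p, q]] ×ˢ [[c, d]]))
    (hg : ∀ w ∈ [[p, q]] ×ˢ [[c, d]], HasFDerivAt g (η w) w) :
    (∫ t in c..d, η (q, t) (0, 1)) - (∫ t in c..d, η (p, t) (0, 1)) =
      (∫ s in p..q, η (s, d) (1, 0)) - ∫ s in p..q, η (s, c) (1, 0) := by
  have vertical : ∀ s ∈ [[p, q]], ∫ t in c..d, η (s, t) (0, 1) = g (s, d) - g (s, c) :=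
    fun s hs => integral_apply_eq_sub_of_hasFDerivAt (γ := fun t => (s, t))
      (fun t _ => (hasDerivAt_const t s).prodMk (hasDerivAt_id t)) (fun t ht => hg _ ⟨hs, ht⟩)
      (hη.intervalIntegrable_apply_comp (by fun_prop) (fun t ht => ⟨hs, ht⟩) _)
  have horizontal : ∀ t ∈ [[c, d]], ∫ s in p..q, η (s, t) (1, 0) = g (q, t) - g (p, t) :=
    fun t ht => integral_apply_eq_sub_of_hasFDerivAt (γ := fun s => (s, t))
      (fun s _ => (hasDerivAt_id s).prodMk (hasDerivAt_const s t)) (fun s hs => hg _ ⟨hs, ht⟩)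
      (hη.intervalIntegrable_apply_comp (by fun_prop) (fun s hs => ⟨hs, ht⟩) _)
  rw [vertical q right_mem_uIcc, vertical p left_mem_uIcc, horizontal d right_mem_uIcc,
    horizontal c left_mem_uIcc]
  abel

variable {δ : ℝ}

theorem integral_vertical_sub_eq_integral_horizontal_sub_of_dist_lt
    (hη : ContinuousOn η (Icc 0 1 ×ˢ Icc 0 1))
    (hprim : ∀ z ∈ Icc (0 : ℝ) 1 ×ˢ Icc (0 : ℝ) 1, ∃ g : ℝ × ℝ → F, ∀ w ∈ ball z δ,
      HasFDerivAt g (η w) w)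
    {p q : ℝ} (hp : p ∈ Icc (0 : ℝ) 1) (hq : q ∈ Icc (0 : ℝ) 1) (hpq : dist p q < δ) :
    (∫ t in (0 : ℝ)..1, η (q, t) (0, 1)) - (∫ t in (0 : ℝ)..1, η (p, t) (0, 1)) =
      (∫ s in p..q, η (s, 1) (1, 0)) - ∫ s in p..q, η (s, 0) (1, 0) := by
  -- `φ τ` is the integral of `η` around the boundary of `[p, q] × [0, τ]`.
  set φ : ℝ → F := fun τ =>
    ((∫ t in (0 : ℝ)..τ, η (q, t) (0, 1)) - ∫ t in (0 : ℝ)..τ, η (p, t) (0, 1)) -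
      ((∫ s in p..q, η (s, τ) (1, 0)) - ∫ s in p..q, η (s, 0) (1, 0)) with hφ
  suffices φ 0 = φ 1 by rw [← sub_eq_zero]; simpa [φ] using this.symm
  refine isPreconnected_Icc.apply_eq_of_forall_dist_lt (dist_nonneg.trans_lt hpq)
    (fun τ hτ τ' hτ' hττ' => ?_) (left_mem_Icc.2 zero_le_one) (right_mem_Icc.2 zero_le_one)
  have hrect : [[p, q]] ×ˢ [[τ, τ']] ⊆ ball (p, τ) δ ∩ Icc 0 1 ×ˢ Icc 0 1 := by
    rintro ⟨s, t⟩ ⟨hs, ht⟩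
    refine ⟨?_, uIcc_subset_Icc hp hq hs, uIcc_subset_Icc hτ hτ' ht⟩
    rw [mem_ball, Prod.dist_eq, dist_comm s, dist_comm t]
    exact max_lt ((Real.dist_left_le_of_mem_uIcc hs).trans_lt hpq)
      ((Real.dist_left_le_of_mem_uIcc ht).trans_lt hττ')
  obtain ⟨g, hg⟩ := hprim (p, τ) ⟨hp, hτ⟩
  have green := integral_vertical_sub_eq_integral_horizontal_sub
    (hη.mono fun w hw => (hrect hw).2) (fun w hw => hg w (hrect hw).1)
  have hadd : ∀ s ∈ Icc (0 : ℝ) 1, (∫ t in (0 : ℝ)..τ', η (s, t) (0, 1)) =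
      (∫ t in (0 : ℝ)..τ, η (s, t) (0, 1)) + ∫ t in τ..τ', η (s, t) (0, 1) := by
    intro s hs
    have h0 : (0 : ℝ) ∈ Icc (0 : ℝ) 1 := left_mem_Icc.2 zero_le_one
    exact (integral_add_adjacent_intervals
      (hη.intervalIntegrable_apply_comp (γ := fun t => (s, t)) (by fun_prop)
        (fun t ht => ⟨hs, uIcc_subset_Icc h0 hτ ht⟩) _)
      (hη.intervalIntegrable_apply_comp (γ := fun t => (s, t)) (by fun_prop)
        (fun t ht => ⟨hs, uIcc_subset_Icc hτ hτ' ht⟩) _)).symm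
  simp only [hφ, hadd p hp, hadd q hq]
  linear_combination (norm := module) -green

theorem integral_vertical_zero_eq_integral_vertical_one
    (hη : ContinuousOn η (Icc 0 1 ×ˢ Icc 0 1))
    (hprim : ∀ z ∈ Icc (0 : ℝ) 1 ×ˢ Icc (0 : ℝ) 1, ∃ g : ℝ × ℝ → F, ∀ w ∈ ball z δ,
      HasFDerivAt g (η w) w)
    (hδ : 0 < δ)
    (hloop : ∀ s ∈ Icc (0 : ℝ) 1, η (s, 0) (1, 0) = η (s, 1) (1, 0)) :
    ∫ t in (0 : ℝ)..1, η (0, t) (0, 1) = ∫ t in (0 : ℝ)..1, η (1, t) (0, 1) := by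
  refine isPreconnected_Icc.apply_eq_of_forall_dist_lt
    (g := fun s => ∫ t in (0 : ℝ)..1, η (s, t) (0, 1)) hδ (fun p hp q hq hpq => ?_)
    (left_mem_Icc.2 zero_le_one) (right_mem_Icc.2 zero_le_one)
  have strip := integral_vertical_sub_eq_integral_horizontal_sub_of_dist_lt hη hprim hp hq hpq
  rwa [integral_congr fun s hs => (hloop s (uIcc_subset_Icc hp hq hs)).symm, sub_self, sub_eq_zero,
    eq_comm] at strip

end Planar

section Pullback

variable {E F : Type*} [NormedAddCommGroup E] [NormedSpace ℝ E] [NormedAddCommGroup F]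
  [NormedSpace ℝ F] [CompleteSpace F]

theorem exists_pos_forall_hasFDerivAt_comp_of_fderiv_symmetric {X : Type*}
    [NormedAddCommGroup X] [NormedSpace ℝ X] {U : Set E} (hU : IsOpen U)
    {ω : E → E →L[ℝ] F} (hω : DifferentiableOn ℝ ω U)
    (hclosed : ∀ x ∈ U, ∀ v w : E, fderiv ℝ ω x v w = fderiv ℝ ω x w v)
    {H : X → E} (hH : Differentiable ℝ H) {K : Set X} (hK : IsCompact K) (hKU : MapsTo H K U) :
    ∃ δ > 0, ∀ z ∈ K, ∃ g : X → F, ∀ w ∈ ball z δ,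
      HasFDerivAt g ((ω (H w)).comp (fderiv ℝ H w)) w := by
  set 𝒱 : Set (Set E) := {V | IsOpen V ∧ ∃ f : E → F, ∀ x ∈ V, HasFDerivAt f (ω x) x}
  have hcover : K ⊆ ⋃₀ (preimage H '' 𝒱) := by
    intro z hz
    obtain ⟨r, hr, hrU⟩ := Metric.isOpen_iff.1 hU (H z) (hKU hz)
    obtain ⟨f, hf⟩ := (convex_ball (H z) r).exists_forall_hasFDerivAt_of_fderiv_symmetric
      isOpen_ball (hω.mono hrU) fun x hx => hclosed x (hrU hx)
    exact ⟨H ⁻¹' ball (H z) r, ⟨_, ⟨isOpen_ball, f, hf⟩, rfl⟩, mem_ball_self hr⟩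
  obtain ⟨δ, hδ, hball⟩ := lebesgue_number_lemma_of_metric_sUnion hK
    (by rintro _ ⟨V, hV, rfl⟩; exact hV.1.preimage hH.continuous) hcover
  refine ⟨δ, hδ, fun z hz => ?_⟩
  obtain ⟨_, ⟨V, ⟨-, f, hf⟩, rfl⟩, hzV⟩ := hball z hz
  exact ⟨f ∘ H, fun w hw => (hf _ (hzV hw)).comp w (hH w).hasFDerivAt⟩

theorem fderiv_apply_fst_eq_of_eqOn {H : ℝ × ℝ → E} (hH : Differentiable ℝ H) {a b c d : ℝ}
    (hab : a < b) (hcd : ∀ s ∈ Icc a b, H (s, c) = H (s, d)) {s : ℝ} (hs : s ∈ Icc a b) :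
    fderiv ℝ H (s, c) (1, 0) = fderiv ℝ H (s, d) (1, 0) := by
  have hderiv : ∀ e, HasDerivWithinAt (fun s => H (s, e)) (fderiv ℝ H (s, e) (1, 0)) (Icc a b) s :=
    fun e => ((hH _).hasFDerivAt.comp_hasDerivAt s
      ((hasDerivAt_id s).prodMk (hasDerivAt_const s e))).hasDerivWithinAt
  exact (uniqueDiffOn_Icc hab s hs).eq_deriv _ (hderiv c)
    ((hderiv d).congr (fun x hx => hcd x hx) (hcd s hs))

end Pullback

theorem closed_one_form_loop_integral_homotopy_invariant_general
    {E : Type*} [NormedAddCommGroup E] [NormedSpace ℝ E]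
    (U : Set E) (hU : IsOpen U)
    (ω : E → (E →L[ℝ] ℝ)) (hω : ContDiffOn ℝ 1 ω U)
    (hclosed : ∀ x ∈ U, ∀ v w : E, fderiv ℝ ω x v w = fderiv ℝ ω x w v)
    (H : ℝ × ℝ → E) (hH : ContDiff ℝ 1 H)
    (hHU : ∀ p ∈ Set.Icc (0 : ℝ) 1 ×ˢ Set.Icc (0 : ℝ) 1, H p ∈ U)
    (hHloop : ∀ s ∈ Set.Icc (0 : ℝ) 1, H (s, 0) = H (s, 1)) :
    ∫ t in (0 : ℝ)..1, ω (H (0, t)) (fderiv ℝ H (0, t) (0, 1)) =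
      ∫ t in (0 : ℝ)..1, ω (H (1, t)) (fderiv ℝ H (1, t) (0, 1)) := by
  have hHd : Differentiable ℝ H := hH.differentiable one_ne_zero
  obtain ⟨δ, hδ, hprim⟩ := exists_pos_forall_hasFDerivAt_comp_of_fderiv_symmetric hU
    (hω.differentiableOn one_ne_zero) hclosed hHd (isCompact_Icc.prod isCompact_Icc) hHU
  have hcont : ContinuousOn (fun z => (ω (H z)).comp (fderiv ℝ H z)) (Icc 0 1 ×ˢ Icc 0 1) :=
    (hω.continuousOn.comp hH.continuous.continuousOn hHU).clm_comp
      (hH.continuous_fderiv one_ne_zero).continuousOn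
  refine integral_vertical_zero_eq_integral_vertical_one hcont hprim hδ fun s hs => ?_
  simp only [ContinuousLinearMap.comp_apply, hHloop s hs,
    fderiv_apply_fst_eq_of_eqOn hHd zero_lt_one hHloop hs]

/-- Homotopy invariance of the line integral of a closed 1-form: if
`ω : U → (E →L[ℝ] ℝ)` is a `C¹` 1-form on an open set `U` of a
finite-dimensional real normed space whose derivative is symmetric
(`dω = 0`), and `H : ℝ × ℝ → E` is a `C¹` free homotopy of loops in `U`
(defined on `[0,1] × [0,1]`, with `H s 0 = H s 1`), then the loop integrals
at the two ends of the homotopy agree.  This makes `γ ↦ ∫_γ α` a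
well-defined homomorphism `u : π₁ → ℝ`. -/
theorem closed_one_form_loop_integral_homotopy_invariant
    {E : Type*} [NormedAddCommGroup E] [NormedSpace ℝ E] [FiniteDimensional ℝ E]
    (U : Set E) (hU : IsOpen U)
    (ω : E → (E →L[ℝ] ℝ)) (hω : ContDiffOn ℝ 1 ω U)
    (hclosed : ∀ x ∈ U, ∀ v w : E, fderiv ℝ ω x v w = fderiv ℝ ω x w v)
    (H : ℝ × ℝ → E) (hH : ContDiff ℝ 1 H)
    (hHU : ∀ p ∈ Set.Icc (0 : ℝ) 1 ×ˢ Set.Icc (0 : ℝ) 1, H p ∈ U)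
    (hHloop : ∀ s ∈ Set.Icc (0 : ℝ) 1, H (s, 0) = H (s, 1)) :
    ∫ t in (0 : ℝ)..1, ω (H (0, t)) (fderiv ℝ H (0, t) (0, 1)) =
      ∫ t in (0 : ℝ)..1, ω (H (1, t)) (fderiv ℝ H (1, t) (0, 1)) :=
  closed_one_form_loop_integral_homotopy_invariant_general U hU ω hω hclosed H hH hHU hHloop
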